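/- Let 𝒜 = {A_1,…,A_K} be self-adjoint n×n matrices over 𝔽 (ℝ or ℂ) and let Q be unitary (Q^* = Q^{-1}). Set D_k = Q^*A_kQ. Then the matrix S = Σ_{k=1}^K [D_k^*, D_k ∘ J] is skew-adjoint (S^* = −S), so G = Q·S lies in the tangent space Q·𝕊(n,𝔽) of the unitary group at Q, and G is the gradient of f_𝒜 at Q in the sense that df_𝒜|_Q(Z) = ⟨G, Z⟩_ℝ for all matrices Z. -/

import Mathlib

open Matrix

attribute [local instance] Matrix.frobeniusNormedAddCommGroup Matrix.frobeniusNormedSpace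

variable {𝕜 : Type*} [RCLike 𝕜] {n K : ℕ}

/-- The real Frobenius inner product `⟨X,Y⟩_ℝ = Re ∑ᵢⱼ Xᵢⱼ conj(Yᵢⱼ)`. -/
noncomputable def rinner (X Y : Matrix (Fin n) (Fin n) 𝕜) : ℝ :=
  RCLike.re (∑ i, ∑ j, X i j * (starRingEnd 𝕜) (Y i j))

/-- The off-diagonal part `X ∘ J` (Hadamard product with the matrix `J` having zeros
on the diagonal and ones elsewhere). -/
def offd (X : Matrix (Fin n) (Fin n) 𝕜) : Matrix (Fin n) (Fin n) 𝕜 :=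
  fun i j => if i = j then 0 else X i j

/-- The cost functional `f_𝒜(Q) = (1/2) ∑ₖ ‖J ∘ (Q⁻¹AₖQ)‖²`. -/
noncomputable def costF (A : Fin K → Matrix (Fin n) (Fin n) 𝕜)
    (Q : Matrix (Fin n) (Fin n) 𝕜) : ℝ :=
  (1 / 2) * ∑ k, ∑ i, ∑ j, if i ≠ j then ‖(Q⁻¹ * A k * Q) i j‖ ^ 2 else 0

/-!
Write `D = Q⁻¹AQ` and `W = Q⁻¹Z` (so `D = Q^*AQ` and `W = Q^*Z` for unitary `Q`). The derivative
of `M ↦ M⁻¹AM` at `Q` is `Z ↦ DW - WD`, and the derivative of `X ↦ ‖J ∘ X‖²` at `D` is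
`H ↦ 2⟨J ∘ D, H⟩_ℝ`; hence `df(Z) = ∑ₖ ⟨J ∘ Dₖ, DₖW - WDₖ⟩_ℝ`. By cyclicity of the trace the
commutator moves to the other side of the inner product, `⟨P, DW - WD⟩_ℝ = ⟨D^*P - PD^*, W⟩_ℝ`,
and `⟨S, Q^*Z⟩_ℝ = ⟨QS, Z⟩_ℝ`. Finally `S` is skew-adjoint because each `Dₖ`, hence each
`J ∘ Dₖ`, is self-adjoint, and the commutator of two self-adjoint matrices is skew-adjoint.
-/

attribute [local instance] Matrix.frobeniusNormedRing Matrix.frobeniusNormedAlgebra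

theorem offd_conjTranspose (X : Matrix (Fin n) (Fin n) 𝕜) : (offd X)ᴴ = offd Xᴴ := by
  ext i j
  by_cases h : i = j <;> simp [offd, conjTranspose_apply, h, eq_comm]

theorem conjTranspose_commutator_offd {D : Matrix (Fin n) (Fin n) 𝕜} (hD : Dᴴ = D) :
    (Dᴴ * offd D - offd D * Dᴴ)ᴴ = -(Dᴴ * offd D - offd D * Dᴴ) := by
  simp only [conjTranspose_sub, conjTranspose_mul, offd_conjTranspose, hD, neg_sub]

theorem rinner_eq_re_trace (X Y : Matrix (Fin n) (Fin n) 𝕜) :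
    rinner X Y = RCLike.re (trace (X * Yᴴ)) := by
  simp [rinner, trace, mul_apply]

theorem rinner_eq_sum_inner (X Y : Matrix (Fin n) (Fin n) 𝕜) :
    rinner X Y = ∑ i, ∑ j, inner ℝ (X i j) (Y i j) := by
  simp [rinner, real_inner_eq_re_inner, map_sum, mul_comm]

theorem rinner_sum_left {ι : Type*} (s : Finset ι) (X : ι → Matrix (Fin n) (Fin n) 𝕜)
    (Y : Matrix (Fin n) (Fin n) 𝕜) : rinner (∑ i ∈ s, X i) Y = ∑ i ∈ s, rinner (X i) Y := by
  simp only [rinner_eq_re_trace, Finset.sum_mul, trace_sum, map_sum]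

theorem rinner_mul_left (Q X Y : Matrix (Fin n) (Fin n) 𝕜) :
    rinner (Q * X) Y = rinner X (Qᴴ * Y) := by
  rw [rinner_eq_re_trace, rinner_eq_re_trace, conjTranspose_mul, conjTranspose_conjTranspose,
    Matrix.mul_assoc, trace_mul_comm, ← Matrix.mul_assoc]

theorem rinner_commutator_right (P D W : Matrix (Fin n) (Fin n) 𝕜) :
    rinner P (D * W - W * D) = rinner (Dᴴ * P - P * Dᴴ) W := by
  simp only [rinner_eq_re_trace, conjTranspose_sub, conjTranspose_mul, Matrix.mul_sub,
    Matrix.sub_mul, trace_sub]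
  rw [← Matrix.mul_assoc, trace_mul_comm (P * Wᴴ), Matrix.mul_assoc, Matrix.mul_assoc]

theorem rinner_single_left (i j : Fin n) (x : 𝕜) (H : Matrix (Fin n) (Fin n) 𝕜) :
    rinner (single i j x) H = inner ℝ x (H i j) := by
  rw [rinner_eq_sum_inner, Finset.sum_eq_single i, Finset.sum_eq_single j] <;>
    simp +contextual [single_apply, Ne.symm]

noncomputable def rinnerCLM (P : Matrix (Fin n) (Fin n) 𝕜) : Matrix (Fin n) (Fin n) 𝕜 →L[ℝ] ℝ :=
  LinearMap.toContinuousLinearMap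
    { toFun := rinner P
      map_add' := fun H H' => by
        simp only [rinner_eq_sum_inner, Matrix.add_apply, inner_add_right, Finset.sum_add_distrib]
      map_smul' := fun r H => by
        simp only [rinner_eq_sum_inner, Matrix.smul_apply, real_inner_smul_right, Finset.mul_sum,
          RingHom.id_apply, smul_eq_mul] }

@[simp] theorem rinnerCLM_apply (P H : Matrix (Fin n) (Fin n) 𝕜) : rinnerCLM P H = rinner P H :=
  rfl

def offDiagNormSq (X : Matrix (Fin n) (Fin n) 𝕜) : ℝ :=
  ∑ i, ∑ j, if i ≠ j then ‖X i j‖ ^ 2 else 0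

theorem hasFDerivAt_norm_entry_sq (X : Matrix (Fin n) (Fin n) 𝕜) (i j : Fin n) :
    HasFDerivAt (fun M : Matrix (Fin n) (Fin n) 𝕜 => ‖M i j‖ ^ 2)
      (2 • rinnerCLM (single i j (X i j))) X := by
  have h : HasFDerivAt (fun M : Matrix (Fin n) (Fin n) 𝕜 => ‖M i j‖ ^ 2)
      ((2 • innerSL ℝ (X i j)).comp (entryLinearMap ℝ 𝕜 i j).toContinuousLinearMap) X :=
    HasFDerivAt.comp (g := fun y : 𝕜 => ‖y‖ ^ 2) X
      (hasStrictFDerivAt_norm_sq (X i j)).hasFDerivAt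
      (entryLinearMap ℝ 𝕜 i j).toContinuousLinearMap.hasFDerivAt
  refine h.congr_fderiv (ContinuousLinearMap.ext fun H => ?_)
  simp [rinner_single_left]

theorem hasFDerivAt_offDiagNormSq (X : Matrix (Fin n) (Fin n) 𝕜) :
    HasFDerivAt offDiagNormSq (2 • rinnerCLM (offd X)) X := by
  have hterm (i j : Fin n) :
      HasFDerivAt (fun M : Matrix (Fin n) (Fin n) 𝕜 => if i ≠ j then ‖M i j‖ ^ 2 else 0)
        (if i ≠ j then 2 • rinnerCLM (single i j (X i j)) else 0) X := by
    by_cases h : i = j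
    · simpa [h] using hasFDerivAt_const (0 : ℝ) X
    · simpa [h] using hasFDerivAt_norm_entry_sq X i j
  have hsum : HasFDerivAt offDiagNormSq
      (∑ i, ∑ j, if i ≠ j then 2 • rinnerCLM (single i j (X i j)) else 0) X :=
    HasFDerivAt.fun_sum fun i _ => HasFDerivAt.fun_sum fun j _ => hterm i j
  refine hsum.congr_fderiv (ContinuousLinearMap.ext fun H => ?_)
  simp only [_root_.sum_apply, DFunLike.ite_apply, _root_.zero_apply, _root_.smul_apply,
    rinnerCLM_apply, rinner_single_left, nsmul_eq_mul, Nat.cast_ofNat]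
  simp only [rinner_eq_sum_inner, Finset.mul_sum]
  refine Finset.sum_congr rfl fun i _ => Finset.sum_congr rfl fun j _ => ?_
  by_cases h : i = j <;> simp [h, offd]

section Similarity

variable {m : Type*} [Fintype m] [DecidableEq m]

theorem hasFDerivAt_nonsing_inv {Q : Matrix m m 𝕜} (hQ : IsUnit Q) :
    HasFDerivAt (fun M : Matrix m m 𝕜 => M⁻¹)
      (-ContinuousLinearMap.mulLeftRight ℝ _ Q⁻¹ Q⁻¹) Q := by
  have h := hasFDerivAt_ringInverse (𝕜 := ℝ) hQ.unit
  rw [coe_units_inv, IsUnit.unit_spec] at h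
  exact h.congr_of_eventuallyEq (.of_forall fun M => nonsing_inv_eq_ringInverse M)

theorem hasFDerivAt_inv_mul_mul (A : Matrix m m 𝕜) {Q : Matrix m m 𝕜} (hQ : IsUnit Q) :
    HasFDerivAt (fun M => M⁻¹ * A * M)
      (LinearMap.toContinuousLinearMap
        ((LinearMap.mulLeft ℝ (Q⁻¹ * A * Q) - LinearMap.mulRight ℝ (Q⁻¹ * A * Q)) ∘ₗ
          LinearMap.mulLeft ℝ Q⁻¹)) Q := by
  have h := ((hasFDerivAt_nonsing_inv hQ).mul_const' A).mul' (hasFDerivAt_id Q)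
  refine h.congr_fderiv (ContinuousLinearMap.ext fun Z => ?_)
  -- `simp` cannot evaluate `h`'s derivative: its maps carry the Frobenius topology on matrices,
  -- the goal the product topology. The two agree definitionally, so `change` does it.
  change Q⁻¹ * A * Z + -(Q⁻¹ * Z * Q⁻¹) * A * Q =
    Q⁻¹ * A * Q * (Q⁻¹ * Z) - Q⁻¹ * Z * (Q⁻¹ * A * Q)
  rw [Matrix.mul_assoc (Q⁻¹ * A),
    mul_nonsing_inv_cancel_left (A := Q) Z ((isUnit_iff_isUnit_det Q).mp hQ)]
  noncomm_ring

end Similarity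

theorem fderiv_costF_apply (A : Fin K → Matrix (Fin n) (Fin n) 𝕜) {Q : Matrix (Fin n) (Fin n) 𝕜}
    (hQ : IsUnit Q) (Z : Matrix (Fin n) (Fin n) 𝕜) :
    fderiv ℝ (costF A) Q Z = ∑ k, rinner (offd (Q⁻¹ * A k * Q))
      ((Q⁻¹ * A k * Q) * (Q⁻¹ * Z) - (Q⁻¹ * Z) * (Q⁻¹ * A k * Q)) := by
  -- `costF A` is `fun M ↦ 1 / 2 * ∑ k, offDiagNormSq (M⁻¹ * A k * M)` by definition.
  have h : HasFDerivAt (costF A) ((1 / 2 : ℝ) • ∑ k, (2 • rinnerCLM (offd (Q⁻¹ * A k * Q))).comp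
      (LinearMap.toContinuousLinearMap
        ((LinearMap.mulLeft ℝ (Q⁻¹ * A k * Q) - LinearMap.mulRight ℝ (Q⁻¹ * A k * Q)) ∘ₗ
          LinearMap.mulLeft ℝ Q⁻¹))) Q :=
    (HasFDerivAt.fun_sum fun k _ =>
      (hasFDerivAt_offDiagNormSq _).comp Q (hasFDerivAt_inv_mul_mul (A k) hQ)).const_mul _
  refine (DFunLike.congr_fun h.fderiv Z).trans ?_
  simp [Finset.mul_sum, Matrix.mul_assoc]

theorem gradient_costF_selfAdjoint_unitary_general (A : Fin K → Matrix (Fin n) (Fin n) 𝕜)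
    (hA : ∀ k, (A k)ᴴ = A k)
    (Q : Matrix (Fin n) (Fin n) 𝕜) (hQ1 : Qᴴ * Q = 1)
    (D : Fin K → Matrix (Fin n) (Fin n) 𝕜) (hD : ∀ k, D k = Qᴴ * A k * Q)
    (S : Matrix (Fin n) (Fin n) 𝕜)
    (hS : S = ∑ k, ((D k)ᴴ * offd (D k) - offd (D k) * (D k)ᴴ)) :
    Sᴴ = -S ∧ ∀ Z : Matrix (Fin n) (Fin n) 𝕜,
      fderiv ℝ (costF A) Q Z = rinner (Q * S) Z := by
  have hQinv : Q⁻¹ = Qᴴ := inv_eq_left_inv hQ1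
  have hQ : IsUnit Q := (isUnit_iff_isUnit_det Q).mpr (isUnit_det_of_left_inverse hQ1)
  have hDinv (k : Fin K) : D k = Q⁻¹ * A k * Q := hQinv ▸ hD k
  have hDsa (k : Fin K) : (D k)ᴴ = D k := by
    simp [hD k, conjTranspose_mul, hA, Matrix.mul_assoc]
  refine ⟨?_, fun Z => ?_⟩
  · rw [hS, conjTranspose_sum, ← Finset.sum_neg_distrib]
    exact Finset.sum_congr rfl fun k _ => conjTranspose_commutator_offd (hDsa k)
  · rw [fderiv_costF_apply A hQ Z, rinner_mul_left, ← hQinv, hS, rinner_sum_left]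
    simp only [← hDinv, rinner_commutator_right]

/-- for self-adjoint `A₁,…,A_K` and unitary `Q`, with `D_k = Q^*AₖQ`,
the matrix `S = ∑ₖ [D_k^*, D_k ∘ J]` is skew-adjoint, hence `G = Q·S` lies in the
tangent space `Q·𝕊(n,𝔽)` of the unitary group at `Q`, and `G` is the gradient of
`f_𝒜` at `Q`: `df_𝒜|_Q(Z) = ⟨G, Z⟩_ℝ` for all matrices `Z`. -/
theorem gradient_costF_selfAdjoint_unitary (A : Fin K → Matrix (Fin n) (Fin n) 𝕜)
    (hA : ∀ k, (A k)ᴴ = A k)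
    (Q : Matrix (Fin n) (Fin n) 𝕜) (hQ1 : Qᴴ * Q = 1) (hQ2 : Q * Qᴴ = 1)
    (D : Fin K → Matrix (Fin n) (Fin n) 𝕜) (hD : ∀ k, D k = Qᴴ * A k * Q)
    (S : Matrix (Fin n) (Fin n) 𝕜)
    (hS : S = ∑ k, ((D k)ᴴ * offd (D k) - offd (D k) * (D k)ᴴ)) :
    Sᴴ = -S ∧ ∀ Z : Matrix (Fin n) (Fin n) 𝕜,
      fderiv ℝ (costF A) Q Z = rinner (Q * S) Z :=
  gradient_costF_selfAdjoint_unitary_general A hA Q hQ1 D hD S hS
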